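/- Let k ≥ 1, n ≥ 1, d ≥ 1, β ∈ (0,1), Δ > 0, σ > 0, and let G : [0,∞) → [0,1] be decreasing with 0 < G(Δ/(16σk)) < 1. Let z : {1,…,n} → {1,…,k} with clusters T_i* = {j : z_j = i} of sizes n_i*, let θ₁, …, θ_k ∈ ℝ^d, and let Y_j = θ_{z_j} + w_j where w₁, …, w_n are independent ℝ^d-valued random vectors with P[‖w_j‖ > x] ≤ G(x/σ) for all x ≥ 0. Let D₁ ≥ 0 satisfy P[‖w_j‖ > D₁] ≤ exp(−5/(4β²)) for each j. Then with probability at least 1 − 2k·exp(−(min_i n_i*)/4), the following hold simultaneously for every i ∈ {1,…,k}: (i) |{j ∈ T_i* : ‖Y_j − θ_i‖ ≤ D₁}| ≥ n_i*(1 − β²), and (ii) |{j ∈ T_i* : ‖Y_j − θ_i‖ ≤ Δ/(16k)}| ≥ n_i*·(1 − 5/(4·log(1/G(Δ/(16σk))))). -/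

import Mathlib

open MeasureTheory ProbabilityTheory Finset

/-!
Within a cluster `T`, the points farther than `c` from their centre are counted by a sum of
independent Bernoulli variables of success probability at most `exp (-t)`. The Chernoff bound
with exponent `t` caps the probability that more than `5 |T| / (4t)` of them are far by
`exp (|T| (1 - exp (-t)) - 5 |T| / 4) ≤ exp (-|T| / 4)`. Taking `t = 5 / (4 β²)` for the radius `D₁`
and `t = log (1 / G (Δ / (16 σ k)))` for the radius `Δ / (16 k)`, a union bound over the `2k` bad
events gives the theorem.
-/

section

variable {Ω : Type*} [MeasurableSpace Ω] {μ : Measure Ω} [IsProbabilityMeasure μ]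

theorem mgf_indicator_one {A : Set Ω} (hA : MeasurableSet A) (t : ℝ) :
    mgf (A.indicator 1) μ t = 1 + (Real.exp t - 1) * μ.real A := by
  have hexp : (fun ω => Real.exp (t * A.indicator 1 ω))
      = fun ω => 1 + A.indicator (fun _ => Real.exp t - 1) ω := by
    funext ω
    by_cases h : ω ∈ A <;> simp [h]
  rw [mgf, hexp, integral_add (integrable_const 1) ((integrable_const _).indicator hA),
    integral_indicator_const _ hA]
  simp [mul_comm]

theorem mgf_indicator_one_le_exp {A : Set Ω} (hA : MeasurableSet A) {t p : ℝ} (ht : 0 ≤ t)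
    (hp : μ.real A ≤ p) :
    mgf (A.indicator 1) μ t ≤ Real.exp ((Real.exp t - 1) * p) := by
  have hexp_t : 0 ≤ Real.exp t - 1 := by simp [Real.one_le_exp_iff, ht]
  calc mgf (A.indicator 1) μ t = 1 + (Real.exp t - 1) * μ.real A := mgf_indicator_one hA t
    _ ≤ Real.exp ((Real.exp t - 1) * μ.real A) := by
      linarith [Real.add_one_le_exp ((Real.exp t - 1) * μ.real A)]
    _ ≤ Real.exp ((Real.exp t - 1) * p) := by gcongr

variable {ι α : Type*} [MeasurableSpace α]

open Classical in
theorem measureReal_le_card_filter_mem_le {X : ι → Ω → α} (hX : ∀ j, Measurable (X j))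
    (hindep : iIndepFun X μ) {S : Set α} (hS : MeasurableSet S) (s : Finset ι)
    {t p : ℝ} (ht : 0 ≤ t) (hp : ∀ j ∈ s, μ.real (X j ⁻¹' S) ≤ p) (a : ℝ) :
    μ.real {ω | a ≤ #{j ∈ s | X j ω ∈ S}}
      ≤ Real.exp (#s * ((Real.exp t - 1) * p) - t * a) := by
  set Y : ι → Ω → ℝ := fun j => (X j ⁻¹' S).indicator 1
  have hYmeas : ∀ j, Measurable (Y j) := fun j => measurable_one.indicator (hX j hS)
  have hYindep : iIndepFun Y μ :=
    hindep.comp (fun _ => S.indicator 1) fun _ => measurable_one.indicator hS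
  have hcount : ∀ ω, (#{j ∈ s | X j ω ∈ S} : ℝ) = (∑ j ∈ s, Y j) ω := by
    intro ω
    simp only [Y, natCast_card_filter, Finset.sum_apply, Set.indicator_apply, Set.mem_preimage,
      Pi.one_apply]
  have hint : Integrable (fun ω => Real.exp (t * (∑ j ∈ s, Y j) ω)) μ := by
    refine .of_bound (by fun_prop) (Real.exp (t * #s)) (ae_of_all _ fun ω => ?_)
    rw [Real.norm_of_nonneg (Real.exp_nonneg _), ← hcount]
    gcongr
    exact filter_subset _ _
  have hmgf : mgf (∑ j ∈ s, Y j) μ t ≤ Real.exp (#s * ((Real.exp t - 1) * p)) := by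
    rw [hYindep.mgf_sum hYmeas, Real.exp_nat_mul, ← Finset.prod_const]
    exact Finset.prod_le_prod (fun j _ => mgf_nonneg)
      fun j hj => mgf_indicator_one_le_exp (hX j hS) ht (hp j hj)
  simp_rw [hcount]
  calc μ.real {ω | a ≤ (∑ j ∈ s, Y j) ω}
      ≤ Real.exp (-t * a) * mgf (∑ j ∈ s, Y j) μ t := measure_ge_le_exp_mul_mgf a ht hint
    _ ≤ Real.exp (-t * a) * Real.exp (#s * ((Real.exp t - 1) * p)) := by gcongr
    _ = _ := by rw [← Real.exp_add]; ring_nf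

open Classical in
theorem measureReal_card_filter_notMem_lt_le {X : ι → Ω → α} (hX : ∀ j, Measurable (X j))
    (hindep : iIndepFun X μ) {S : Set α} (hS : MeasurableSet S) (s : Finset ι)
    {t : ℝ} (ht : 0 < t) (hp : ∀ j ∈ s, μ.real (X j ⁻¹' S) ≤ Real.exp (-t)) :
    μ.real {ω | #{j ∈ s | X j ω ∉ S} < #s * (1 - 5 / (4 * t))} ≤ Real.exp (-#s / 4) := by
  have hsub : {ω | #{j ∈ s | X j ω ∉ S} < #s * (1 - 5 / (4 * t))}
      ⊆ {ω | 5 / (4 * t) * #s ≤ #{j ∈ s | X j ω ∈ S}} := by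
    intro ω hω
    have hsplit : (#s : ℝ) = #{j ∈ s | X j ω ∈ S} + #{j ∈ s | X j ω ∉ S} := by
      exact_mod_cast (card_filter_add_card_filter_not (s := s) (fun j => X j ω ∈ S)).symm
    simp only [Set.mem_ofPred_eq, hsplit] at hω ⊢
    linarith
  have hexponent : #s * ((Real.exp t - 1) * Real.exp (-t)) - t * (5 / (4 * t) * #s) ≤ -#s / 4 := by
    have hexp : (Real.exp t - 1) * Real.exp (-t) = 1 - Real.exp (-t) := by
      rw [sub_mul, ← Real.exp_add, add_neg_cancel, Real.exp_zero, one_mul]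
    have ht' : t * (5 / (4 * t) * #s) = 5 / 4 * #s := by field_simp
    rw [hexp, ht']
    nlinarith [Real.exp_pos (-t), (#s).cast_nonneg (α := ℝ)]
  calc _ ≤ μ.real {ω | 5 / (4 * t) * #s ≤ #{j ∈ s | X j ω ∈ S}} := measureReal_mono hsub
    _ ≤ _ := measureReal_le_card_filter_mem_le hX hindep hS s ht.le hp _
    _ ≤ Real.exp (-#s / 4) := Real.exp_le_exp.2 hexponent

theorem measureReal_card_near_center_lt_le [Fintype ι] {κ E : Type*} [DecidableEq κ]
    [NormedAddCommGroup E] [MeasurableSpace E] [OpensMeasurableSpace E]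
    (z : ι → κ) (θ : κ → E) {w : ι → Ω → E} (hw : ∀ j, Measurable (w j))
    (hindep : iIndepFun w μ) (i : κ) {c t : ℝ} (ht : 0 < t)
    (htail : ∀ j, μ.real {ω | c < ‖w j ω‖} ≤ Real.exp (-t)) :
    μ.real {ω | (#{j ∈ ({j | z j = i} : Finset ι) | ‖θ (z j) + w j ω - θ i‖ ≤ c} : ℝ)
        < #{j | z j = i} * (1 - 5 / (4 * t))} ≤ Real.exp (-#{j | z j = i} / 4) := by
  classical
  have hcount : ∀ ω, #{j ∈ ({j | z j = i} : Finset ι) | ‖θ (z j) + w j ω - θ i‖ ≤ c}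
      = #{j ∈ ({j | z j = i} : Finset ι) | w j ω ∉ {v : E | c < ‖v‖}} := by
    intro ω
    refine congrArg _ (filter_congr fun j hj => ?_)
    rw [(mem_filter.1 hj).2, add_sub_cancel_left, Set.mem_ofPred_eq, not_lt]
  simp_rw [hcount]
  exact measureReal_card_filter_notMem_lt_le hw hindep
    (measurableSet_lt measurable_const measurable_norm) _ ht fun j _ => htail j

theorem one_sub_le_measureReal_forall_and [Fintype ι] {P Q : ι → Ω → Prop} {ε : ℝ}
    (hP : ∀ i, μ.real {ω | ¬ P i ω} ≤ ε) (hQ : ∀ i, μ.real {ω | ¬ Q i ω} ≤ ε) :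
    1 - 2 * Fintype.card ι * ε ≤ μ.real {ω | ∀ i, P i ω ∧ Q i ω} := by
  set E := {ω | ∀ i, P i ω ∧ Q i ω}
  have hbad : Eᶜ ⊆ ⋃ i, ({ω | ¬ P i ω} ∪ {ω | ¬ Q i ω}) := by
    intro ω hω
    simp only [E, Set.mem_compl_iff, Set.mem_ofPred_eq, not_forall, not_and_or] at hω
    simpa only [Set.mem_iUnion, Set.mem_union, Set.mem_ofPred_eq] using hω
  have hunion : μ.real (⋃ i, ({ω | ¬ P i ω} ∪ {ω | ¬ Q i ω})) ≤ 2 * Fintype.card ι * ε := by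
    calc _ ≤ ∑ i, μ.real ({ω | ¬ P i ω} ∪ {ω | ¬ Q i ω}) := measureReal_iUnion_fintype_le _
      _ ≤ ∑ _i : ι, 2 * ε := by
        gcongr with i
        linarith [measureReal_union_le (μ := μ) {ω | ¬ P i ω} {ω | ¬ Q i ω}, hP i, hQ i]
      _ = 2 * Fintype.card ι * ε := by rw [sum_const, card_univ, nsmul_eq_mul]; ring
  have htotal : 1 ≤ μ.real E + μ.real Eᶜ := by
    simpa [Set.union_compl_self] using measureReal_union_le (μ := μ) E Eᶜ
  linarith [measureReal_mono (μ := μ) hbad]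

end

theorem k_cluster_initialization_concentration_general
    (k n d : ℕ)
    (β Δ σ : ℝ) (hβ : β ∈ Set.Ioo (0 : ℝ) 1) (hΔ : 0 < Δ)
    (G : ℝ → ℝ)
    (hGpos : 0 < G (Δ / (16 * σ * k))) (hGlt : G (Δ / (16 * σ * k)) < 1)
    (z : Fin n → Fin k) (θ : Fin k → EuclideanSpace ℝ (Fin d))
    (Ω : Type*) [MeasureSpace Ω] [IsProbabilityMeasure (ℙ : Measure Ω)]
    (w : Fin n → Ω → EuclideanSpace ℝ (Fin d))
    (hmeas : ∀ j, Measurable (w j))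
    (hindep : iIndepFun w ℙ)
    (htail : ∀ j, ∀ x : ℝ, 0 ≤ x → (ℙ {ω | x < ‖w j ω‖}).toReal ≤ G (x / σ))
    (D₁ : ℝ)
    (hD₁tail : ∀ j, (ℙ {ω | D₁ < ‖w j ω‖}).toReal ≤ Real.exp (-(5 / (4 * β ^ 2)))) :
    1 - 2 * k * Real.exp (-((⨅ i : Fin k,
          ((Finset.univ.filter (fun j => z j = i)).card) : ℕ) : ℝ) / 4)
      ≤ (ℙ {ω | ∀ i : Fin k,
            (((Finset.univ.filter (fun j => z j = i)).card : ℝ) * (1 - β ^ 2)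
              ≤ (((Finset.univ.filter (fun j => z j = i)).filter
                  (fun j => ‖(θ (z j) + w j ω) - θ i‖ ≤ D₁)).card : ℝ)) ∧
            (((Finset.univ.filter (fun j => z j = i)).card : ℝ)
                * (1 - 5 / (4 * Real.log (1 / G (Δ / (16 * σ * k)))))
              ≤ (((Finset.univ.filter (fun j => z j = i)).filter
                  (fun j => ‖(θ (z j) + w j ω) - θ i‖ ≤ Δ / (16 * k))).card : ℝ))}).toReal := by
  have hβ0 : 0 < β := hβ.1
  have hmin : ∀ i, Real.exp (-(#{j | z j = i} : ℝ) / 4)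
      ≤ Real.exp (-((⨅ i : Fin k, #{j | z j = i} : ℕ) : ℝ) / 4) := fun i => by
    gcongr
    exact ciInf_le (OrderBot.bddBelow _) i
  have hlog : 0 < Real.log (1 / G (Δ / (16 * σ * k))) :=
    Real.log_pos (one_lt_one_div hGpos hGlt)
  have htail_near : ∀ j, (ℙ : Measure Ω).real {ω | Δ / (16 * k) < ‖w j ω‖}
      ≤ Real.exp (-Real.log (1 / G (Δ / (16 * σ * k)))) := fun j => by
    rw [Real.exp_neg, Real.exp_log (by positivity), one_div, inv_inv,
      show Δ / (16 * σ * k) = Δ / (16 * k) / σ by ring]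
    exact htail j _ (by positivity)
  calc _ = 1 - 2 * Fintype.card (Fin k)
        * Real.exp (-((⨅ i : Fin k, #{j | z j = i} : ℕ) : ℝ) / 4) := by rw [Fintype.card_fin]
    _ ≤ _ := one_sub_le_measureReal_forall_and (fun i => ?_) (fun i => ?_)
  · have h := measureReal_card_near_center_lt_le z θ hmeas hindep i
      (show 0 < 5 / (4 * β ^ 2) by positivity) hD₁tail
    rw [show 5 / (4 * (5 / (4 * β ^ 2))) = β ^ 2 by field_simp] at h
    simpa only [not_le] using h.trans (hmin i)
  · simpa only [not_le] using
      (measureReal_card_near_center_lt_le z θ hmeas hindep i hlog htail_near).trans (hmin i)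

/-- Concentration event for the `k`-cluster initialization analysis (Lemma
`E-conc-init-k` of the paper): with probability at least
`1 − 2k·exp(−(min_i n_i*)/4)`, for each cluster `i`, at least `n_i*(1 − β²)`
points of the cluster lie within distance `D₁` of `θ_i`, and at least
`n_i*(1 − 5/(4 log(1/G(Δ/(16σk)))))` of them lie within `Δ/(16k)` of `θ_i`. -/
theorem k_cluster_initialization_concentration
    (k n d : ℕ) (hk : 1 ≤ k) (hn : 1 ≤ n) (hd : 1 ≤ d)
    (β Δ σ : ℝ) (hβ : β ∈ Set.Ioo (0 : ℝ) 1) (hΔ : 0 < Δ) (hσ : 0 < σ)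
    (G : ℝ → ℝ) (hGanti : AntitoneOn G (Set.Ici 0))
    (hGrange : ∀ x : ℝ, 0 ≤ x → G x ∈ Set.Icc (0 : ℝ) 1)
    (hGpos : 0 < G (Δ / (16 * σ * k))) (hGlt : G (Δ / (16 * σ * k)) < 1)
    (z : Fin n → Fin k) (θ : Fin k → EuclideanSpace ℝ (Fin d))
    (Ω : Type*) [MeasureSpace Ω] [IsProbabilityMeasure (ℙ : Measure Ω)]
    (w : Fin n → Ω → EuclideanSpace ℝ (Fin d))
    (hmeas : ∀ j, Measurable (w j))
    (hindep : iIndepFun w ℙ)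
    (htail : ∀ j, ∀ x : ℝ, 0 ≤ x → (ℙ {ω | x < ‖w j ω‖}).toReal ≤ G (x / σ))
    (D₁ : ℝ) (hD₁ : 0 ≤ D₁)
    (hD₁tail : ∀ j, (ℙ {ω | D₁ < ‖w j ω‖}).toReal ≤ Real.exp (-(5 / (4 * β ^ 2)))) :
    1 - 2 * k * Real.exp (-((⨅ i : Fin k,
          ((Finset.univ.filter (fun j => z j = i)).card) : ℕ) : ℝ) / 4)
      ≤ (ℙ {ω | ∀ i : Fin k,
            (((Finset.univ.filter (fun j => z j = i)).card : ℝ) * (1 - β ^ 2)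
              ≤ (((Finset.univ.filter (fun j => z j = i)).filter
                  (fun j => ‖(θ (z j) + w j ω) - θ i‖ ≤ D₁)).card : ℝ)) ∧
            (((Finset.univ.filter (fun j => z j = i)).card : ℝ)
                * (1 - 5 / (4 * Real.log (1 / G (Δ / (16 * σ * k)))))
              ≤ (((Finset.univ.filter (fun j => z j = i)).filter
                  (fun j => ‖(θ (z j) + w j ω) - θ i‖ ≤ Δ / (16 * k))).card : ℝ))}).toReal :=
  k_cluster_initialization_concentration_general k n d β Δ σ hβ hΔ G hGpos hGlt z θ Ω w hmeas hindep
    htail D₁ hD₁tail
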